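/- For positive reals λ_e, λ and for every integer n ≥ 2, the semi-distributed mean age a(n) = (λ_e + (nλ/(n-1))·(λ_e/λ)) / (λ/n + nλ/(n-1)) satisfies λ_e/λ ≤ a(n) ≤ 2λ_e/λ. -/

import Mathlib

/-!
Clearing the denominators `x - 1` and `x`, the mean age is `λ_e / λ` times the rational factor
`x (2x - 1) / (x² + x - 1)` of the node count `x`. This factor is at least `1` because the
difference of numerator and denominator is `(x - 1)²`, and at most `2` because
`2 (x² + x - 1) - x (2x - 1) = 3x - 2`.
-/

noncomputable def semiAgeFactor (x : ℝ) : ℝ := x * (2 * x - 1) / (x ^ 2 + x - 1)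

lemma semiAge_eq_mul_semiAgeFactor (lam_e : ℝ) {lam x : ℝ} (hl : lam ≠ 0) (hx : 1 < x) :
    (lam_e + (x * lam / (x - 1)) * (lam_e / lam)) / (lam / x + x * lam / (x - 1)) =
      lam_e / lam * semiAgeFactor x := by
  have hx0 : x ≠ 0 := by positivity
  have hx1 : x - 1 ≠ 0 := sub_ne_zero.mpr hx.ne'
  have hq : x ^ 2 + x - 1 ≠ 0 := by nlinarith
  rw [semiAgeFactor]
  field_simp
  ring

lemma one_le_semiAgeFactor {x : ℝ} (hx : 1 ≤ x) : 1 ≤ semiAgeFactor x := by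
  have hq : 0 < x ^ 2 + x - 1 := by nlinarith
  rw [semiAgeFactor, one_le_div hq]
  nlinarith [sq_nonneg (x - 1)]

lemma semiAgeFactor_le_two {x : ℝ} (hx : 1 ≤ x) : semiAgeFactor x ≤ 2 := by
  have hq : 0 < x ^ 2 + x - 1 := by nlinarith
  rw [semiAgeFactor, div_le_iff₀ hq]
  nlinarith

theorem semi_age_bounds (lam_e lam : ℝ) (hle : 0 < lam_e) (hl : 0 < lam)
    (n : ℕ) (hn : 2 ≤ n) :
    lam_e / lam ≤
      (lam_e + ((n : ℝ) * lam / ((n : ℝ) - 1)) * (lam_e / lam)) /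
        (lam / (n : ℝ) + (n : ℝ) * lam / ((n : ℝ) - 1)) ∧
    (lam_e + ((n : ℝ) * lam / ((n : ℝ) - 1)) * (lam_e / lam)) /
        (lam / (n : ℝ) + (n : ℝ) * lam / ((n : ℝ) - 1)) ≤ 2 * lam_e / lam := by
  have hn1 : (1 : ℝ) < n := by exact_mod_cast hn
  have hmin : 0 ≤ lam_e / lam := by positivity
  rw [semiAge_eq_mul_semiAgeFactor lam_e hl.ne' hn1, mul_div_assoc]
  constructor
  · exact le_mul_of_one_le_right hmin (one_le_semiAgeFactor hn1.le)
  · rw [mul_comm 2]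
    exact mul_le_mul_of_nonneg_left (semiAgeFactor_le_two hn1.le) hmin
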